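/- arXiv:1501.04260 — 3 statements merged into one kernel-verified Lean document; each statement's English description precedes it below -/
import Mathlib

section
/- Let n ≥ 1, β > 0, δ > 0, and let A : [0,∞) → ℝ^{n×n} be a piecewise-constant function (a switching signal among finitely many matrices) such that A(t) is entrywise nonnegative for every t ≥ 0. Suppose p, q : [0,∞) → ℝⁿ are differentiable, p(t) is entrywise nonnegative for every t ≥ 0, p(0) = q(0), and for all t ≥ 0: p'(t) = (βA(t) − δI)p(t) − β·diag(p(t))·A(t)·p(t) and q'(t) = (βA(t) − δI)q(t). Then for every t ≥ 0, p(t) ≤ q(t) entrywise, and in particular ‖p(t)‖₁ ≤ ‖q(t)‖₁, where ‖x‖₁ = Σ_{i=1}^n |x_i|. -/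
/-!
Writing `M(t) = βA(t) - δI`, the difference `w = p - q` satisfies `w' ≤ M(t) w`, because the
nonlinear term `β diag(p) A p` is entrywise nonnegative. The matrices `M(t)` are nonnegative off
the diagonal and, as `A` takes finitely many values, their entries are bounded above by some
`C ≥ 0`. For such a system the squared positive part `f = ∑ᵢ max(wᵢ, 0)²` satisfies
`f' ≤ 2Cn f`: off the diagonal `wⱼ` may be replaced by its positive part, and the resulting
quadratic form is bounded by Cauchy–Schwarz. Since `f(0) = 0`, Grönwall's inequality gives
`f ≡ 0`, that is `p ≤ q`.
-/

open Matrix Finset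

lemma hasDerivAt_max_zero_sq (x : ℝ) :
    HasDerivAt (fun y : ℝ => max y 0 ^ 2) (2 * max x 0) x := by
  rcases lt_trichotomy x 0 with hx | rfl | hx
  · rw [max_eq_right hx.le, mul_zero]
    refine (hasDerivAt_const x (0 : ℝ)).congr_of_eventuallyEq ?_
    filter_upwards [eventually_lt_nhds hx] with y hy
    simp [max_eq_right hy.le]
  · rw [hasDerivAt_iff_isLittleO_nhds_zero]
    simp only [zero_add, max_self, ne_eq, OfNat.ofNat_ne_zero, not_false_eq_true, zero_pow,
      sub_zero, mul_zero, smul_zero]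
    refine (Asymptotics.isBigO_of_le _ fun h => ?_).trans_isLittleO
      (Asymptotics.isLittleO_pow_id one_lt_two)
    rcases le_total h 0 with h0 | h0 <;> simp [h0, sq_nonneg]
  · rw [max_eq_left hx.le]
    refine (by simpa using hasDerivAt_pow 2 x : HasDerivAt (fun y : ℝ => y ^ 2) (2 * x) x)
      |>.congr_of_eventuallyEq ?_
    filter_upwards [eventually_gt_nhds hx] with y hy
    simp [max_eq_left hy.le]

lemma exists_forall_apply_le_of_finite_range {α m n R : Type*} [Finite m] [Finite n]
    [Preorder R] [IsDirectedOrder R] [Nonempty R] {A : α → Matrix m n R}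
    (hA : (Set.range A).Finite) : ∃ C, ∀ a i j, A a i j ≤ C := by
  obtain ⟨C, hC⟩ := (Set.finite_iUnion fun i => Set.finite_iUnion fun j =>
    hA.image fun B => B i j).bddAbove
  exact ⟨C, fun a i j => hC (Set.mem_iUnion₂.2 ⟨i, j, A a, ⟨a, rfl⟩, rfl⟩)⟩

section

variable {ι : Type*} [DecidableEq ι] {A : Matrix ι ι ℝ} {β : ℝ}

lemma smul_sub_smul_one_apply_le {δ C : ℝ} (hβ : 0 ≤ β) (hδ : 0 ≤ δ)
    (hA : ∀ i j, A i j ≤ C) (i j : ι) : (β • A - δ • (1 : Matrix ι ι ℝ)) i j ≤ β * C := by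
  simp only [Matrix.sub_apply, Matrix.smul_apply, smul_eq_mul]
  linarith [mul_le_mul_of_nonneg_left (hA i j) hβ, mul_nonneg hδ (zero_le_one_elem i j)]

lemma smul_sub_smul_one_apply_nonneg_of_ne (δ : ℝ) (hβ : 0 ≤ β) (hA : ∀ i j, 0 ≤ A i j)
    {i j : ι} (hij : i ≠ j) : 0 ≤ (β • A - δ • (1 : Matrix ι ι ℝ)) i j := by
  simpa [one_apply_ne hij] using mul_nonneg hβ (hA i j)

lemma mulVec_sub_smul_diagonal_mul_mulVec_sub_le [Fintype ι] (M : Matrix ι ι ℝ) (hβ : 0 ≤ β)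
    (hA : ∀ i j, 0 ≤ A i j) {p : ι → ℝ} (hp : 0 ≤ p) (q : ι → ℝ) :
    M *ᵥ p - β • (diagonal p * A) *ᵥ p - M *ᵥ q ≤ M *ᵥ (p - q) := by
  have hApnn : 0 ≤ (diagonal p * A) *ᵥ p := by
    intro i
    rw [← mulVec_mulVec, mulVec_diagonal]
    exact mul_nonneg (hp i) (sum_nonneg fun j _ => mul_nonneg (hA i j) (hp j))
  calc M *ᵥ p - β • (diagonal p * A) *ᵥ p - M *ᵥ q
      = M *ᵥ (p - q) - β • (diagonal p * A) *ᵥ p := by rw [mulVec_sub]; abel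
    _ ≤ M *ᵥ (p - q) := sub_le_self _ (smul_nonneg hβ hApnn)

end

section

variable {ι : Type*} [Fintype ι]

lemma sum_max_zero_mul_mulVec_le {M : Matrix ι ι ℝ} {C : ℝ} (hC : 0 ≤ C)
    (hMle : ∀ i j, M i j ≤ C) (hMoff : ∀ i j, i ≠ j → 0 ≤ M i j) (w : ι → ℝ) :
    ∑ i, max (w i) 0 * (M *ᵥ w) i ≤ C * Fintype.card ι * ∑ i, max (w i) 0 ^ 2 := by
  set a := fun i => max (w i) 0
  have ha : ∀ i, 0 ≤ a i := fun i => le_max_right _ _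
  have hterm : ∀ i j, a i * (M i j * w j) ≤ C * (a i * a j) := by
    intro i j
    rcases eq_or_ne i j with rfl | hij
    · have haw : a i * w i = a i * a i := by
        rcases le_total (w i) 0 with h | h <;> simp [a, h]
      calc a i * (M i i * w i) = M i i * (a i * a i) := by rw [← haw]; ring
        _ ≤ C * (a i * a i) := mul_le_mul_of_nonneg_right (hMle i i) (mul_nonneg (ha i) (ha i))
    · have hMw : M i j * w j ≤ C * a j :=
        (mul_le_mul_of_nonneg_left (le_max_left _ _) (hMoff i j hij)).trans
          (mul_le_mul_of_nonneg_right (hMle i j) (ha j))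
      linarith [mul_le_mul_of_nonneg_left hMw (ha i)]
  calc ∑ i, a i * (M *ᵥ w) i = ∑ i, ∑ j, a i * (M i j * w j) := by
        simp only [mulVec, dotProduct, mul_sum]
    _ ≤ ∑ i, ∑ j, C * (a i * a j) := sum_le_sum fun i _ => sum_le_sum fun j _ => hterm i j
    _ = C * (∑ i, a i) ^ 2 := by rw [sq, sum_mul_sum, mul_sum]; simp_rw [mul_sum]
    _ ≤ C * (Fintype.card ι * ∑ i, a i ^ 2) := by gcongr; exact sq_sum_le_card_mul_sum_sq
    _ = C * Fintype.card ι * ∑ i, a i ^ 2 := by ring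

lemma hasDerivAt_sum_max_zero_sq {w : ℝ → ι → ℝ} {w' : ι → ℝ} {t : ℝ}
    (hw : HasDerivAt w w' t) :
    HasDerivAt (fun s => ∑ i, max (w s i) 0 ^ 2) (∑ i, 2 * max (w t i) 0 * w' i) t :=
  HasDerivAt.fun_sum fun i _ => by
    exact (hasDerivAt_max_zero_sq (w t i)).comp t (hasDerivAt_pi.1 hw i)

lemma le_zero_of_sum_max_zero_sq_le_zero {w : ι → ℝ} (h : ∑ i, max (w i) 0 ^ 2 ≤ 0) :
    w ≤ 0 := by
  intro i
  simpa using (sum_eq_zero_iff_of_nonneg fun j _ => sq_nonneg (max (w j) 0)).1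
    (h.antisymm (by positivity)) i (mem_univ i)

theorem le_zero_of_hasDerivAt_le_mulVec {w w' : ℝ → ι → ℝ} {M : ℝ → Matrix ι ι ℝ} {C : ℝ}
    (hC : 0 ≤ C) (hMle : ∀ t ≥ 0, ∀ i j, M t i j ≤ C)
    (hMoff : ∀ t ≥ 0, ∀ i j, i ≠ j → 0 ≤ M t i j)
    (hw : ∀ t ≥ 0, HasDerivAt w (w' t) t) (hw' : ∀ t ≥ 0, w' t ≤ M t *ᵥ w t) (hw0 : w 0 ≤ 0) :
    ∀ t ≥ 0, w t ≤ 0 := by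
  set f := fun s => ∑ i, max (w s i) 0 ^ 2
  have hf := fun t (ht : 0 ≤ t) => hasDerivAt_sum_max_zero_sq (hw t ht)
  have hf0 : f 0 ≤ 0 := by
    have (i : ι) : max (w 0 i) 0 = 0 := max_eq_right (hw0 i)
    simp [f, this]
  have hbound : ∀ t ≥ 0, ∑ i, 2 * max (w t i) 0 * w' t i ≤ 2 * C * Fintype.card ι * f t := by
    intro t ht
    calc ∑ i, 2 * max (w t i) 0 * w' t i ≤ 2 * ∑ i, max (w t i) 0 * (M t *ᵥ w t) i := by
          rw [mul_sum]
          refine sum_le_sum fun i _ => ?_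
          rw [mul_assoc]
          exact mul_le_mul_of_nonneg_left
            (mul_le_mul_of_nonneg_left (hw' t ht i) (le_max_right _ _)) two_pos.le
      _ ≤ 2 * C * Fintype.card ι * f t := by
          rw [mul_assoc 2, mul_assoc 2]
          gcongr
          exact sum_max_zero_mul_mulVec_le hC (hMle t ht) (hMoff t ht) (w t)
  intro T hT
  apply le_zero_of_sum_max_zero_sq_le_zero
  have hfT := le_gronwallBound_of_liminf_deriv_right_le (ε := 0) (b := T)
    (fun x hx => (hf x hx.1).continuousAt.continuousWithinAt)
    (fun x hx r hr => (hf x hx.1).hasDerivWithinAt.liminf_right_slope_le hr)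
    hf0 (fun x hx => by simpa using hbound x hx.1) T ⟨hT, le_rfl⟩
  rwa [gronwallBound_ε0_δ0] at hfT

end

theorem stmt5_general {n : ℕ} (β δ : ℝ) (hβ : 0 < β) (hδ : 0 < δ)
    (A : ℝ → Matrix (Fin n) (Fin n) ℝ)
    (hAfin : (Set.range A).Finite)
    (hAnn : ∀ t : ℝ, 0 ≤ t → ∀ i j, 0 ≤ A t i j)
    (p q : ℝ → Fin n → ℝ)
    (hp0 : p 0 = q 0)
    (hpnn : ∀ t : ℝ, 0 ≤ t → ∀ i, 0 ≤ p t i)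
    (hp : ∀ t : ℝ, 0 ≤ t → HasDerivAt p
      ((β • A t - δ • (1 : Matrix (Fin n) (Fin n) ℝ)).mulVec (p t)
        - β • (Matrix.diagonal (p t) * A t).mulVec (p t)) t)
    (hq : ∀ t : ℝ, 0 ≤ t → HasDerivAt q
      ((β • A t - δ • (1 : Matrix (Fin n) (Fin n) ℝ)).mulVec (q t)) t) :
    ∀ t : ℝ, 0 ≤ t → (∀ i, p t i ≤ q t i) ∧ (∑ i, |p t i|) ≤ ∑ i, |q t i| := by
  obtain ⟨C, hC⟩ := exists_forall_apply_le_of_finite_range hAfin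
  have hpq : ∀ t ≥ 0, p t - q t ≤ 0 :=
    le_zero_of_hasDerivAt_le_mulVec (M := fun t => β • A t - δ • 1) (C := β * max C 0)
      (by positivity)
      (fun t _ => smul_sub_smul_one_apply_le hβ.le hδ.le
        fun i j => (hC t i j).trans (le_max_left _ _))
      (fun t ht _ _ => smul_sub_smul_one_apply_nonneg_of_ne δ hβ.le (hAnn t ht))
      (fun t ht => (hp t ht).sub (hq t ht))
      (fun t ht => mulVec_sub_smul_diagonal_mul_mulVec_sub_le _ hβ.le (hAnn t ht) (hpnn t ht) _)
      (by simp [hp0])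
  intro t ht
  have hle (i : Fin n) : p t i ≤ q t i := sub_nonpos.1 (hpq t ht i)
  refine ⟨hle, sum_le_sum fun i _ => ?_⟩
  rw [abs_of_nonneg (hpnn t ht i)]
  exact (hle i).trans (le_abs_self _)

/-- For the switched N-intertwined model `p' = (βA(t) - δI)p - β diag(p) A(t) p`
and its linearization `q' = (βA(t) - δI)q` with the same initial condition, the solution of the
nonlinear model stays entrywise below that of the linearization; in particular
`‖p(t)‖₁ ≤ ‖q(t)‖₁`. -/
theorem stmt5 {n : ℕ} (hn : 1 ≤ n) (β δ : ℝ) (hβ : 0 < β) (hδ : 0 < δ)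
    (A : ℝ → Matrix (Fin n) (Fin n) ℝ)
    (hAfin : (Set.range A).Finite)
    (hApc : ∀ t : ℝ, 0 ≤ t → ∃ ε > (0 : ℝ), ∀ u ∈ Set.Ico t (t + ε), A u = A t)
    (hAnn : ∀ t : ℝ, 0 ≤ t → ∀ i j, 0 ≤ A t i j)
    (p q : ℝ → Fin n → ℝ)
    (hp0 : p 0 = q 0)
    (hpnn : ∀ t : ℝ, 0 ≤ t → ∀ i, 0 ≤ p t i)
    (hp : ∀ t : ℝ, 0 ≤ t → HasDerivAt p
      ((β • A t - δ • (1 : Matrix (Fin n) (Fin n) ℝ)).mulVec (p t)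
        - β • (Matrix.diagonal (p t) * A t).mulVec (p t)) t)
    (hq : ∀ t : ℝ, 0 ≤ t → HasDerivAt q
      ((β • A t - δ • (1 : Matrix (Fin n) (Fin n) ℝ)).mulVec (q t)) t) :
    ∀ t : ℝ, 0 ≤ t → (∀ i, p t i ≤ q t i) ∧ (∑ i, |p t i|) ≤ ∑ i, |q t i| :=
  stmt5_general β δ hβ hδ A hAfin hAnn p q hp0 hpnn hp hq
end

section
/- Let n ≥ 1, β > 0, δ > 0, and let A be an n×n entrywise nonnegative symmetric matrix with zero diagonal. Suppose p : [0,∞) → ℝⁿ is differentiable, satisfies p'(t) = (βA − δI)p(t) − β·diag(p(t))·A·p(t) for all t ≥ 0, and p(0) ∈ [0,1]ⁿ. Then p(t) is entrywise nonnegative for every t ≥ 0. -/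
/-!
Along a solution, `V = ∑ i, ((p i)⁻)²` is differentiable with `V' = -2 ∑ i, (p i)⁻ * p i'`, and
`(p i)⁻ * p i' = β (p i)⁻ (1 + (p i)⁻) (A p) i + δ ((p i)⁻)²`. Since `A ≥ 0`,
`(A p) i ≥ -(A p⁻) i`, so on a time interval where `p` is bounded `V' ≤ K V`; Grönwall's
inequality and `V 0 = 0` then force `V = 0`.
-/

open Matrix Set Filter Topology Finset

lemma negPart_mul_self (x : ℝ) : x⁻ * x = -x⁻ ^ 2 := by
  rcases le_total x 0 with hx | hx
  · rw [negPart_eq_neg.2 hx]; ring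
  · simp [negPart_eq_zero.2 hx]

lemma negPart_le_abs (x : ℝ) : x⁻ ≤ |x| := by
  rw [negPart_def]; exact max_le (neg_le_abs x) (abs_nonneg x)

lemma hasDerivAt_negPart_sq (x : ℝ) : HasDerivAt (fun y : ℝ ↦ y⁻ ^ 2) (-2 * x⁻) x := by
  have off_zero : ∀ y ≠ (0 : ℝ), HasDerivAt (fun y : ℝ ↦ y⁻ ^ 2) (-2 * y⁻) y := by
    intro y hy
    rcases hy.lt_or_gt with hy | hy
    · have h : (fun y : ℝ ↦ y⁻ ^ 2) =ᶠ[𝓝 y] fun y ↦ y ^ 2 := by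
        filter_upwards [Iio_mem_nhds hy] with z hz
        rw [negPart_eq_neg.2 (le_of_lt hz), neg_sq]
      rw [negPart_eq_neg.2 hy.le]
      simpa using (hasDerivAt_pow 2 y).congr_of_eventuallyEq h
    · have h : (fun y : ℝ ↦ y⁻ ^ 2) =ᶠ[𝓝 y] fun _ ↦ 0 := by
        filter_upwards [Ioi_mem_nhds hy] with z hz
        simp [negPart_eq_zero.2 (le_of_lt (mem_Ioi.1 hz))]
      simpa [negPart_eq_zero.2 hy.le] using (hasDerivAt_const y (0 : ℝ)).congr_of_eventuallyEq h
  exact hasDerivAt_of_hasDerivAt_of_ne' off_zero (by fun_prop) (by fun_prop) x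

lemma nonpos_of_deriv_le_mul_self {f f' : ℝ → ℝ} {K a b : ℝ} (hf : ContinuousOn f (Icc a b))
    (hf' : ∀ x ∈ Ico a b, HasDerivWithinAt f (f' x) (Ici x) x) (ha : f a ≤ 0)
    (bound : ∀ x ∈ Ico a b, f' x ≤ K * f x) : ∀ x ∈ Icc a b, f x ≤ 0 := by
  intro x hx
  simpa [gronwallBound_ε0_δ0] using le_gronwallBound_of_liminf_deriv_right_le (ε := 0) hf
    (fun x hx _ hr ↦ (hf' x hx).liminf_right_slope_le hr) ha (by simpa using bound) x hx

variable {ι : Type*} [Fintype ι]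

lemma nonneg_of_negPart_deriv_le {p F : ℝ → ι → ℝ} {K a b : ℝ} (hp : ContinuousOn p (Icc a b))
    (hp' : ∀ s ∈ Ico a b, HasDerivWithinAt p (F s) (Ici s) s) (ha : 0 ≤ p a)
    (bound : ∀ s ∈ Ico a b, -∑ i, (p s i)⁻ * F s i ≤ K * ∑ i, (p s i)⁻ ^ 2) :
    ∀ s ∈ Icc a b, 0 ≤ p s := by
  set V : ℝ → ℝ := fun s ↦ ∑ i, (p s i)⁻ ^ 2
  have hV' : ∀ s ∈ Ico a b,
      HasDerivWithinAt V (∑ i, -2 * (p s i)⁻ * F s i) (Ici s) s := fun s hs ↦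
    HasDerivWithinAt.fun_sum fun i _ ↦
      ((hasDerivAt_negPart_sq (p s i)).comp_hasDerivWithinAt s
        (hasDerivWithinAt_pi.1 (hp' s hs) i) :)
  have hV : ContinuousOn V (Icc a b) :=
    continuousOn_finsetSum _ fun i _ ↦
      (continuous_negPart.comp_continuousOn (continuousOn_pi.1 hp i)).pow 2
  have hV_nonpos := nonpos_of_deriv_le_mul_self (K := 2 * K) hV hV'
    (by simp [V, negPart_eq_zero.2 (ha _)]) fun s hs ↦ by
      have hs_bound := bound s hs
      simp only [mul_assoc, ← mul_sum]
      linarith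
  intro s hs i
  have hsq : (p s i)⁻ ^ 2 ≤ V s := single_le_sum (fun j _ ↦ sq_nonneg (p s j)⁻) (mem_univ i)
  have : (p s i)⁻ = 0 := pow_eq_zero_iff two_ne_zero |>.1 <|
    le_antisymm (hsq.trans (hV_nonpos s hs)) (sq_nonneg _)
  exact negPart_eq_zero.1 this

namespace Matrix

lemma dotProduct_mulVec_le (A : Matrix ι ι ℝ) (u : ι → ℝ) :
    u ⬝ᵥ A *ᵥ u ≤ (∑ i, ∑ j, |A i j|) * ∑ k, u k ^ 2 := by
  have hsq : ∀ i, u i ^ 2 ≤ ∑ k, u k ^ 2 := fun i ↦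
    single_le_sum (fun k _ ↦ sq_nonneg (u k)) (mem_univ i)
  have hprod : ∀ i j, |u i * u j| ≤ ∑ k, u k ^ 2 := fun i j ↦ by
    rw [abs_mul]
    nlinarith [hsq i, hsq j, abs_mul_abs_self (u i), abs_mul_abs_self (u j),
      sq_nonneg (|u i| - |u j|)]
  calc u ⬝ᵥ A *ᵥ u = ∑ i, ∑ j, A i j * (u i * u j) := by
        simp only [dotProduct, mulVec, mul_sum]; congr! 2; ring
    _ ≤ ∑ i, ∑ j, |A i j| * ∑ k, u k ^ 2 := by
        refine sum_le_sum fun i _ ↦ sum_le_sum fun j _ ↦ ?_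
        calc A i j * (u i * u j) ≤ |A i j * (u i * u j)| := le_abs_self _
          _ ≤ |A i j| * ∑ k, u k ^ 2 := by
            rw [abs_mul]; exact mul_le_mul_of_nonneg_left (hprod i j) (abs_nonneg _)
    _ = (∑ i, ∑ j, |A i j|) * ∑ k, u k ^ 2 := by simp only [sum_mul]

lemma neg_mulVec_le_mulVec_negPart {A : Matrix ι ι ℝ} (hA : ∀ i j, 0 ≤ A i j) (x : ι → ℝ)
    (i : ι) : -(A *ᵥ x) i ≤ (A *ᵥ x⁻) i := by
  simp only [mulVec, dotProduct, Pi.negPart_apply, ← sum_neg_distrib, ← mul_neg]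
  exact sum_le_sum fun j _ ↦ mul_le_mul_of_nonneg_left (neg_le_negPart _) (hA i j)

lemma mulVec_nonneg {A : Matrix ι ι ℝ} (hA : ∀ i j, 0 ≤ A i j) {u : ι → ℝ} (hu : 0 ≤ u)
    (i : ι) : 0 ≤ (A *ᵥ u) i :=
  sum_nonneg fun j _ ↦ mul_nonneg (hA i j) (hu j)

end Matrix

variable [DecidableEq ι]

def nIntertwinedField (β δ : ℝ) (A : Matrix ι ι ℝ) (x : ι → ℝ) : ι → ℝ :=
  (β • A - δ • (1 : Matrix ι ι ℝ)) *ᵥ x - β • (diagonal x * A) *ᵥ x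

lemma nIntertwinedField_apply (β δ : ℝ) (A : Matrix ι ι ℝ) (x : ι → ℝ) (i : ι) :
    nIntertwinedField β δ A x i = β * (1 - x i) * (A *ᵥ x) i - δ * x i := by
  simp only [nIntertwinedField, ← mulVec_mulVec, sub_mulVec, smul_mulVec, one_mulVec,
    mulVec_diagonal, Pi.sub_apply, Pi.smul_apply, smul_eq_mul]
  ring

lemma neg_sum_negPart_mul_nIntertwinedField_le {β δ M : ℝ} (hβ : 0 ≤ β) {A : Matrix ι ι ℝ}
    (hA : ∀ i j, 0 ≤ A i j) {x : ι → ℝ} (hx : ‖x‖ ≤ M) :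
    -∑ i, (x i)⁻ * nIntertwinedField β δ A x i
      ≤ (β * (1 + M) * ∑ i, ∑ j, |A i j| + |δ|) * ∑ i, (x i)⁻ ^ 2 := by
  have hM : ∀ i, (x i)⁻ ≤ M := fun i ↦
    (negPart_le_abs _).trans ((norm_le_pi_norm x i).trans hx)
  have hterm : ∀ i, -((x i)⁻ * nIntertwinedField β δ A x i)
      ≤ β * (1 + M) * ((x i)⁻ * (A *ᵥ x⁻) i) + |δ| * (x i)⁻ ^ 2 := fun i ↦ by
    have hAx := neg_mulVec_le_mulVec_negPart hA x i
    have hAx_nonneg := mulVec_nonneg hA (negPart_nonneg x) i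
    have hxi := negPart_nonneg (x i)
    have key : -((x i)⁻ * nIntertwinedField β δ A x i)
        = β * ((x i)⁻ * (1 + (x i)⁻)) * -(A *ᵥ x) i - δ * (x i)⁻ ^ 2 := by
      rw [nIntertwinedField_apply]
      linear_combination (β * (A *ᵥ x) i + δ) * negPart_mul_self (x i)
    rw [key]
    have hfac : (x i)⁻ * (1 + (x i)⁻) ≤ (1 + M) * (x i)⁻ := by nlinarith [hM i]
    have hβ_term : β * ((x i)⁻ * (1 + (x i)⁻)) * -(A *ᵥ x) i
        ≤ β * ((1 + M) * (x i)⁻) * (A *ᵥ x⁻) i :=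
      calc _ ≤ β * ((x i)⁻ * (1 + (x i)⁻)) * (A *ᵥ x⁻) i := by gcongr
        _ ≤ _ := by gcongr
    have hδ_term : -δ * (x i)⁻ ^ 2 ≤ |δ| * (x i)⁻ ^ 2 :=
      mul_le_mul_of_nonneg_right (neg_le_abs δ) (sq_nonneg _)
    linarith
  calc -∑ i, (x i)⁻ * nIntertwinedField β δ A x i
      ≤ ∑ i, (β * (1 + M) * ((x i)⁻ * (A *ᵥ x⁻) i) + |δ| * (x i)⁻ ^ 2) := by
        rw [← sum_neg_distrib]; exact sum_le_sum fun i _ ↦ hterm i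
    _ = β * (1 + M) * (x⁻ ⬝ᵥ A *ᵥ x⁻) + |δ| * ∑ i, (x i)⁻ ^ 2 := by
        simp only [sum_add_distrib, ← mul_sum, dotProduct, Pi.negPart_apply]
    _ ≤ β * (1 + M) * ((∑ i, ∑ j, |A i j|) * ∑ i, (x i)⁻ ^ 2) + |δ| * ∑ i, (x i)⁻ ^ 2 := by
        gcongr
        · exact mul_nonneg hβ (by linarith [norm_nonneg x])
        · exact dotProduct_mulVec_le A x⁻
    _ = _ := by ring

theorem stmt6_general {n : ℕ} (β δ : ℝ) (hβ : 0 < β)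
    (A : Matrix (Fin n) (Fin n) ℝ)
    (hAnn : ∀ i j, 0 ≤ A i j)
    (p : ℝ → Fin n → ℝ)
    (hp : ∀ t : ℝ, 0 ≤ t → HasDerivAt p
      ((β • A - δ • (1 : Matrix (Fin n) (Fin n) ℝ)).mulVec (p t)
        - β • (Matrix.diagonal (p t) * A).mulVec (p t)) t)
    (hp0 : ∀ i, p 0 i ∈ Set.Icc (0 : ℝ) 1) :
    ∀ t : ℝ, 0 ≤ t → ∀ i, 0 ≤ p t i := by
  intro t ht
  have hcont : ContinuousOn p (Icc 0 t) := fun s hs ↦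
    (hp s hs.1).continuousAt.continuousWithinAt
  obtain ⟨M, hM⟩ := isCompact_Icc.exists_bound_of_continuousOn hcont
  exact nonneg_of_negPart_deriv_le (F := fun s ↦ nIntertwinedField β δ A (p s)) hcont
    (fun s hs ↦ (hp s hs.1).hasDerivWithinAt) (fun i ↦ (hp0 i).1)
    (fun s hs ↦ neg_sum_negPart_mul_nIntertwinedField_le hβ.le hAnn
      (hM s (Ico_subset_Icc_self hs))) t ⟨ht, le_rfl⟩

/-- For the N-intertwined model `p' = (βA - δI)p - β diag(p) A p` over a static
network with nonnegative symmetric adjacency matrix `A` with zero diagonal, if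
`p(0) ∈ [0,1]ⁿ` then `p(t)` is entrywise nonnegative for all `t ≥ 0`. -/
theorem stmt6 {n : ℕ} (hn : 1 ≤ n) (β δ : ℝ) (hβ : 0 < β) (hδ : 0 < δ)
    (A : Matrix (Fin n) (Fin n) ℝ)
    (hAnn : ∀ i j, 0 ≤ A i j) (hAsymm : A.IsSymm) (hAdiag : ∀ i, A i i = 0)
    (p : ℝ → Fin n → ℝ)
    (hp : ∀ t : ℝ, 0 ≤ t → HasDerivAt p
      ((β • A - δ • (1 : Matrix (Fin n) (Fin n) ℝ)).mulVec (p t)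
        - β • (Matrix.diagonal (p t) * A).mulVec (p t)) t)
    (hp0 : ∀ i, p 0 i ∈ Set.Icc (0 : ℝ) 1) :
    ∀ t : ℝ, 0 ≤ t → ∀ i, 0 ≤ p t i :=
  stmt6_general β δ hβ A hAnn p hp hp0
end

section
/- Let n₁, n₂ ≥ 1 be integers and θ₁, θ₂, φ ∈ [0,1]. Let Ā be the (n₁+n₂)×(n₁+n₂) symmetric block matrix whose upper-left n₁×n₁ block is θ₁(J_{n₁} − I_{n₁}), whose lower-right n₂×n₂ block is θ₂(J_{n₂} − I_{n₂}), and whose off-diagonal blocks are φ·J_{n₁,n₂} and φ·J_{n₂,n₁}, where J denotes the all-ones matrix of the indicated size. Then there exists ε with min(θ₁,θ₂) ≤ ε ≤ max(θ₁,θ₂) such that λ_max(Ā) = ( n₁θ₁ + n₂θ₂ + √((n₁θ₁ − n₂θ₂)² + 4 n₁ n₂ φ²) )/2 − ε. -/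
open Matrix

/-- The largest element of the real spectrum of a matrix; for a real symmetric
matrix this is the largest eigenvalue. -/
noncomputable def lamMax {m : Type*} [Fintype m] [DecidableEq m] (A : Matrix m m ℝ) : ℝ :=
  sSup (spectrum ℝ A)

private lemma sqrt_shift (x y k : ℝ) (hk : 0 ≤ k) :
    Real.sqrt (x ^ 2 + k) ≤ Real.sqrt (y ^ 2 + k) + |x - y| := by
  have hy0 : 0 ≤ Real.sqrt (y ^ 2 + k) := Real.sqrt_nonneg _
  have hy2 : (Real.sqrt (y ^ 2 + k)) ^ 2 = y ^ 2 + k := Real.sq_sqrt (by positivity)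
  have habs : |y| ≤ Real.sqrt (y ^ 2 + k) := by
    rw [← Real.sqrt_sq_eq_abs]
    exact Real.sqrt_le_sqrt (by linarith)
  rw [Real.sqrt_le_iff]
  constructor
  · positivity
  · have h1 : |x| ≤ |y| + |x - y| := by
      calc |x| = |y + (x - y)| := by ring_nf
      _ ≤ |y| + |x - y| := abs_add_le _ _
    have h2 : x ^ 2 ≤ (|y| + |x - y|) ^ 2 := by
      rw [← sq_abs x]
      exact pow_le_pow_left₀ (abs_nonneg x) h1 2
    have h3 : |y| * |x - y| ≤ Real.sqrt (y ^ 2 + k) * |x - y| :=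
      mul_le_mul_of_nonneg_right habs (abs_nonneg _)
    nlinarith [sq_abs y, abs_nonneg (x - y)]

set_option maxHeartbeats 1000000 in
/-- The largest eigenvalue of the expected adjacency matrix of a two-community
random graph equals `(n₁θ₁ + n₂θ₂ + √((n₁θ₁ - n₂θ₂)² + 4 n₁ n₂ φ²))/2 - ε` for some `ε`
between `θ₁` and `θ₂`. -/
theorem stmt7 (n₁ n₂ : ℕ) (h₁ : 1 ≤ n₁) (h₂ : 1 ≤ n₂)
    (θ₁ θ₂ φ : ℝ) (hθ₁ : θ₁ ∈ Set.Icc (0 : ℝ) 1) (hθ₂ : θ₂ ∈ Set.Icc (0 : ℝ) 1)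
    (hφ : φ ∈ Set.Icc (0 : ℝ) 1)
    (Abar : Matrix (Fin n₁ ⊕ Fin n₂) (Fin n₁ ⊕ Fin n₂) ℝ)
    (hAbar : Abar = Matrix.fromBlocks
      (θ₁ • (Matrix.of (fun _ _ => (1 : ℝ)) - (1 : Matrix (Fin n₁) (Fin n₁) ℝ)))
      (φ • Matrix.of fun _ _ => (1 : ℝ))
      (φ • Matrix.of fun _ _ => (1 : ℝ))
      (θ₂ • (Matrix.of (fun _ _ => (1 : ℝ)) - (1 : Matrix (Fin n₂) (Fin n₂) ℝ)))) :
    ∃ ε : ℝ, min θ₁ θ₂ ≤ ε ∧ ε ≤ max θ₁ θ₂ ∧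
      lamMax Abar =
        ((n₁ : ℝ) * θ₁ + (n₂ : ℝ) * θ₂
          + Real.sqrt (((n₁ : ℝ) * θ₁ - (n₂ : ℝ) * θ₂) ^ 2 + 4 * (n₁ : ℝ) * (n₂ : ℝ) * φ ^ 2)) / 2
          - ε := by
  obtain ⟨hθ₁0, hθ₁1⟩ := hθ₁
  obtain ⟨hθ₂0, hθ₂1⟩ := hθ₂
  obtain ⟨hφ0, hφ1⟩ := hφ
  have hn₁ : (1 : ℝ) ≤ (n₁ : ℝ) := by exact_mod_cast h₁
  have hn₂ : (1 : ℝ) ≤ (n₂ : ℝ) := by exact_mod_cast h₂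
  set a : ℝ := ((n₁ : ℝ) - 1) * θ₁ with ha
  set b : ℝ := ((n₂ : ℝ) - 1) * θ₂ with hb
  set k : ℝ := (n₁ : ℝ) * (n₂ : ℝ) * φ ^ 2 with hkdef
  have hk0 : 0 ≤ k := by positivity
  have ha0 : 0 ≤ a := by nlinarith
  have hb0 : 0 ≤ b := by nlinarith
  set sr : ℝ := Real.sqrt ((a - b) ^ 2 + 4 * k) with hsrdef
  have hsr0 : 0 ≤ sr := Real.sqrt_nonneg _
  have hsrsq : sr ^ 2 = (a - b) ^ 2 + 4 * k := Real.sq_sqrt (by positivity)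
  set lam : ℝ := (a + b + sr) / 2 with hlamdef
  have hla : a ≤ lam := by nlinarith [sq_nonneg (sr + (a - b))]
  have hlb : b ≤ lam := by nlinarith [sq_nonneg (sr + (b - a))]
  have hprod : (lam - a) * (lam - b) = k := by
    have : lam - a = (sr - (a - b)) / 2 := by rw [hlamdef]; ring
    have h2 : lam - b = (sr + (a - b)) / 2 := by rw [hlamdef]; ring
    rw [this, h2]; nlinarith [hsrsq]
  -- entrywise formula for mulVec
  have key : ∀ v : Fin n₁ ⊕ Fin n₂ → ℝ, Abar.mulVec v = Sum.elim
      (fun i => θ₁ * ((∑ i', v (Sum.inl i')) - v (Sum.inl i)) + φ * (∑ j', v (Sum.inr j')))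
      (fun j => φ * (∑ i', v (Sum.inl i')) + θ₂ * ((∑ j', v (Sum.inr j')) - v (Sum.inr j))) := by
    intro v
    funext x
    cases x with
    | inl i =>
      simp only [hAbar, mulVec, dotProduct, Fintype.sum_sum_type, fromBlocks_apply₁₁,
        fromBlocks_apply₁₂, Sum.elim_inl, Matrix.smul_apply, Matrix.sub_apply, Matrix.of_apply,
        Matrix.one_apply, smul_eq_mul]
      rw [Finset.sum_congr rfl (fun i' _ => by by_cases h : i = i' <;> simp [h] :
        ∀ i' ∈ Finset.univ, θ₁ * ((1 : ℝ) - if i = i' then 1 else 0) * v (Sum.inl i')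
          = θ₁ * v (Sum.inl i') - (if i = i' then θ₁ * v (Sum.inl i') else 0))]
      rw [Finset.sum_sub_distrib, Finset.sum_ite_eq]
      simp only [Finset.mem_univ, if_true, ← Finset.mul_sum]
      ring
    | inr j =>
      simp only [hAbar, mulVec, dotProduct, Fintype.sum_sum_type, fromBlocks_apply₂₁,
        fromBlocks_apply₂₂, Sum.elim_inr, Matrix.smul_apply, Matrix.sub_apply, Matrix.of_apply,
        Matrix.one_apply, smul_eq_mul]
      rw [Finset.sum_congr rfl (fun j' _ => by by_cases h : j = j' <;> simp [h] :
        ∀ j' ∈ Finset.univ, θ₂ * ((1 : ℝ) - if j = j' then 1 else 0) * v (Sum.inr j')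
          = θ₂ * v (Sum.inr j') - (if j = j' then θ₂ * v (Sum.inr j') else 0))]
      rw [Finset.sum_sub_distrib, Finset.sum_ite_eq]
      simp only [Finset.mem_univ, if_true, ← Finset.mul_sum]
      ring
  -- spectrum characterization
  have hspec : ∀ x : ℝ, x ∈ spectrum ℝ Abar ↔
      ∃ v : Fin n₁ ⊕ Fin n₂ → ℝ, v ≠ 0 ∧ Abar.mulVec v = x • v := by
    intro x
    rw [← AlgEquiv.spectrum_eq (Matrix.toLinAlgEquiv' (R := ℝ)) Abar,
      ← Module.End.hasEigenvalue_iff_mem_spectrum]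
    constructor
    · intro h
      obtain ⟨v, hv⟩ := h.exists_hasEigenvector
      refine ⟨v, hv.2, ?_⟩
      have := hv.apply_eq_smul
      rwa [Matrix.toLinAlgEquiv'_apply] at this
    · rintro ⟨v, hv0, hv⟩
      exact Module.End.hasEigenvalue_of_hasEigenvector
        ⟨Module.End.mem_eigenspace_iff.mpr (by rw [Matrix.toLinAlgEquiv'_apply, hv]), hv0⟩
  -- lam is an eigenvalue
  have hmem : lam ∈ spectrum ℝ Abar := by
    rw [hspec]
    by_cases hc : φ = 0 ∧ lam = a
    · refine ⟨Sum.elim (fun _ => 1) (fun _ => 0), ?_, ?_⟩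
      · intro h
        have := congrFun h (Sum.inl ⟨0, h₁⟩)
        simp at this
      · rw [key]
        funext x
        cases x with
        | inl i =>
          simp only [Sum.elim_inl, Sum.elim_inr, Finset.sum_const, Finset.card_univ,
            Fintype.card_fin, nsmul_eq_mul, Pi.smul_apply, smul_eq_mul, hc.1]
          rw [hc.2, ha]; ring
        | inr j => simp [Finset.sum_const, hc.1]
    · refine ⟨Sum.elim (fun _ => (n₂ : ℝ) * φ) (fun _ => lam - a), ?_, ?_⟩
      · intro h
        have h1 := congrFun h (Sum.inl ⟨0, h₁⟩)
        have h2 := congrFun h (Sum.inr ⟨0, h₂⟩)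
        simp at h1 h2
        rcases h1 with h1 | h1
        · exact absurd h1 (by omega)
        · exact hc ⟨h1, by linarith⟩
      · rw [key]
        funext x
        cases x with
        | inl i =>
          simp only [Sum.elim_inl, Sum.elim_inr, Finset.sum_const, Finset.card_univ,
            Fintype.card_fin, nsmul_eq_mul, Pi.smul_apply, smul_eq_mul]
          ring
        | inr j =>
          simp only [Sum.elim_inl, Sum.elim_inr, Finset.sum_const, Finset.card_univ,
            Fintype.card_fin, nsmul_eq_mul, Pi.smul_apply, smul_eq_mul]
          linear_combination -hprod - hkdef - (lam - a) * hb
  -- lam is an upper bound for the spectrum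
  have hbound : ∀ x ∈ spectrum ℝ Abar, x ≤ lam := by
    intro x hx
    rw [hspec] at hx
    obtain ⟨v, hv0, hv⟩ := hx
    set s₁ : ℝ := ∑ i, v (Sum.inl i) with hs₁
    set s₂ : ℝ := ∑ j, v (Sum.inr j) with hs₂
    set q₁ : ℝ := ∑ i, v (Sum.inl i) ^ 2 with hq₁
    set q₂ : ℝ := ∑ j, v (Sum.inr j) ^ 2 with hq₂
    have hq₁0 : 0 ≤ q₁ := Finset.sum_nonneg fun _ _ => sq_nonneg _
    have hq₂0 : 0 ≤ q₂ := Finset.sum_nonneg fun _ _ => sq_nonneg _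
    have hqpos : 0 < q₁ + q₂ := by
      obtain ⟨z, hz⟩ := Function.ne_iff.mp hv0
      have hzle : v z ^ 2 ≤ q₁ + q₂ := by
        have : q₁ + q₂ = ∑ w, v w ^ 2 := by
          rw [hq₁, hq₂, Fintype.sum_sum_type]
        rw [this]
        exact Finset.single_le_sum (fun w _ => sq_nonneg (v w)) (Finset.mem_univ z)
      have : 0 < v z ^ 2 :=
        lt_of_le_of_ne (sq_nonneg _) (Ne.symm (pow_ne_zero 2 hz))
      linarith
    have hCS₁ : s₁ ^ 2 ≤ (n₁ : ℝ) * q₁ := by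
      have := sq_sum_le_card_mul_sum_sq (s := Finset.univ) (f := fun i => v (Sum.inl i))
      simpa using this
    have hCS₂ : s₂ ^ 2 ≤ (n₂ : ℝ) * q₂ := by
      have := sq_sum_le_card_mul_sum_sq (s := Finset.univ) (f := fun j => v (Sum.inr j))
      simpa using this
    have hxq : x * (q₁ + q₂) = θ₁ * (s₁ ^ 2 - q₁) + θ₂ * (s₂ ^ 2 - q₂) + 2 * φ * s₁ * s₂ := by
      have hh := (key v).symm.trans hv
      have hl : ∀ i, θ₁ * (s₁ - v (Sum.inl i)) + φ * s₂ = x * v (Sum.inl i) := by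
        intro i
        have := congrFun hh (Sum.inl i)
        simpa using this
      have hr : ∀ j, φ * s₁ + θ₂ * (s₂ - v (Sum.inr j)) = x * v (Sum.inr j) := by
        intro j
        have := congrFun hh (Sum.inr j)
        simpa using this
      have e1 : ∑ i, v (Sum.inl i) * (θ₁ * (s₁ - v (Sum.inl i)) + φ * s₂)
          = ∑ i, v (Sum.inl i) * (x * v (Sum.inl i)) := by
        exact Finset.sum_congr rfl fun i _ => by rw [hl i]
      have e2 : ∑ j, v (Sum.inr j) * (φ * s₁ + θ₂ * (s₂ - v (Sum.inr j)))
          = ∑ j, v (Sum.inr j) * (x * v (Sum.inr j)) := by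
        exact Finset.sum_congr rfl fun j _ => by rw [hr j]
      have l1 : ∑ i, v (Sum.inl i) * (θ₁ * (s₁ - v (Sum.inl i)) + φ * s₂)
          = θ₁ * (s₁ ^ 2 - q₁) + φ * s₂ * s₁ := by
        rw [Finset.sum_congr rfl (fun i _ => by ring :
          ∀ i ∈ Finset.univ, v (Sum.inl i) * (θ₁ * (s₁ - v (Sum.inl i)) + φ * s₂)
            = (θ₁ * s₁ + φ * s₂) * v (Sum.inl i) - θ₁ * v (Sum.inl i) ^ 2)]
        rw [Finset.sum_sub_distrib, ← Finset.mul_sum, ← Finset.mul_sum, ← hs₁, ← hq₁]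
        ring
      have l2 : ∑ j, v (Sum.inr j) * (φ * s₁ + θ₂ * (s₂ - v (Sum.inr j)))
          = θ₂ * (s₂ ^ 2 - q₂) + φ * s₁ * s₂ := by
        rw [Finset.sum_congr rfl (fun j _ => by ring :
          ∀ j ∈ Finset.univ, v (Sum.inr j) * (φ * s₁ + θ₂ * (s₂ - v (Sum.inr j)))
            = (φ * s₁ + θ₂ * s₂) * v (Sum.inr j) - θ₂ * v (Sum.inr j) ^ 2)]
        rw [Finset.sum_sub_distrib, ← Finset.mul_sum, ← Finset.mul_sum, ← hs₂, ← hq₂]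
        ring
      have r1 : ∑ i, v (Sum.inl i) * (x * v (Sum.inl i)) = x * q₁ := by
        rw [Finset.sum_congr rfl (fun i _ => by ring :
          ∀ i ∈ Finset.univ, v (Sum.inl i) * (x * v (Sum.inl i)) = x * v (Sum.inl i) ^ 2)]
        rw [← Finset.mul_sum, ← hq₁]
      have r2 : ∑ j, v (Sum.inr j) * (x * v (Sum.inr j)) = x * q₂ := by
        rw [Finset.sum_congr rfl (fun j _ => by ring :
          ∀ j ∈ Finset.univ, v (Sum.inr j) * (x * v (Sum.inr j)) = x * v (Sum.inr j) ^ 2)]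
        rw [← Finset.mul_sum, ← hq₂]
      have := congrArg₂ (· + ·) (l1.symm.trans (e1.trans r1)) (l2.symm.trans (e2.trans r2))
      linarith [this]
    -- the 2x2 PSD inequality
    have h2phi : 2 * ((n₁ : ℝ) * n₂ * φ) * s₁ * s₂
        ≤ (n₂ : ℝ) * (lam - a) * s₁ ^ 2 + (n₁ : ℝ) * (lam - b) * s₂ ^ 2 := by
      set A' : ℝ := (n₂ : ℝ) * (lam - a) with hA'
      set B' : ℝ := (n₁ : ℝ) * (lam - b) with hB'
      have hA'0 : 0 ≤ A' := mul_nonneg (by positivity) (by linarith)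
      have hB'0 : 0 ≤ B' := mul_nonneg (by positivity) (by linarith)
      have hAB : A' * B' = ((n₁ : ℝ) * n₂ * φ) ^ 2 := by
        rw [hA', hB']
        linear_combination ((n₁ : ℝ) * n₂) * hprod + ((n₁ : ℝ) * n₂) * hkdef
      rcases eq_or_lt_of_le hA'0 with hA0 | hApos
      · have hC : (n₁ : ℝ) * n₂ * φ = 0 := by
          have h0 : ((n₁ : ℝ) * n₂ * φ) ^ 2 = 0 := by rw [← hAB, ← hA0]; ring
          exact (pow_eq_zero_iff two_ne_zero).mp h0
        rw [hC, ← hA0]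
        simp
        positivity
      · nlinarith [sq_nonneg (A' * s₁ - ((n₁ : ℝ) * n₂ * φ) * s₂), hApos]
    have hn₁0 : (0 : ℝ) < n₁ := by linarith
    have hn₂0 : (0 : ℝ) < n₂ := by linarith
    have hlam0 : 0 ≤ lam := le_trans ha0 hla
    have hi1 : (lam + θ₁) * s₁ ^ 2 ≤ (lam + θ₁) * ((n₁ : ℝ) * q₁) :=
      mul_le_mul_of_nonneg_left hCS₁ (by linarith)
    have hi2 : (lam + θ₂) * s₂ ^ 2 ≤ (lam + θ₂) * ((n₂ : ℝ) * q₂) :=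
      mul_le_mul_of_nonneg_left hCS₂ (by linarith)
    have e1 : (n₂ : ℝ) * ((lam + θ₁) * s₁ ^ 2) ≤ (n₂ : ℝ) * ((lam + θ₁) * ((n₁ : ℝ) * q₁)) :=
      mul_le_mul_of_nonneg_left hi1 (by positivity)
    have e2 : (n₁ : ℝ) * ((lam + θ₂) * s₂ ^ 2) ≤ (n₁ : ℝ) * ((lam + θ₂) * ((n₂ : ℝ) * q₂)) :=
      mul_le_mul_of_nonneg_left hi2 (by positivity)
    have heq1 : (n₂ : ℝ) * s₁ ^ 2 * ((n₁ : ℝ) * θ₁) = (n₂ : ℝ) * s₁ ^ 2 * (θ₁ + a) := by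
      rw [ha]; ring
    have heq2 : (n₁ : ℝ) * s₂ ^ 2 * ((n₂ : ℝ) * θ₂) = (n₁ : ℝ) * s₂ ^ 2 * (θ₂ + b) := by
      rw [hb]; ring
    have hfin : (n₁ : ℝ) * n₂ * (x * (q₁ + q₂)) ≤ (n₁ : ℝ) * n₂ * (lam * (q₁ + q₂)) := by
      have hx2 : (n₁ : ℝ) * n₂ * (x * (q₁ + q₂))
          = (n₁ : ℝ) * n₂ * (θ₁ * (s₁ ^ 2 - q₁) + θ₂ * (s₂ ^ 2 - q₂) + 2 * φ * s₁ * s₂) := by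
        rw [hxq]
      rw [hx2]
      linarith [e1, e2, h2phi, heq1, heq2]
    have := le_of_mul_le_mul_left (by linarith [hfin] : ((n₁ : ℝ) * n₂) * (x * (q₁ + q₂)) ≤ ((n₁ : ℝ) * n₂) * (lam * (q₁ + q₂))) (by positivity)
    exact le_of_mul_le_mul_right (by linarith [this]) hqpos
  have hsup : lamMax Abar = lam := IsGreatest.csSup_eq ⟨hmem, hbound⟩
  -- arithmetic conclusion
  set S : ℝ := Real.sqrt (((n₁ : ℝ) * θ₁ - (n₂ : ℝ) * θ₂) ^ 2 + 4 * (n₁ : ℝ) * (n₂ : ℝ) * φ ^ 2)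
    with hSdef
  have hSsr1 : S ≤ sr + |θ₁ - θ₂| := by
    have := sqrt_shift ((n₁ : ℝ) * θ₁ - (n₂ : ℝ) * θ₂) (a - b) (4 * k) (by positivity)
    have habs : |(n₁ : ℝ) * θ₁ - (n₂ : ℝ) * θ₂ - (a - b)| = |θ₁ - θ₂| := by
      congr 1; rw [ha, hb]; ring
    have harg : ((n₁ : ℝ) * θ₁ - (n₂ : ℝ) * θ₂) ^ 2 + 4 * k
        = ((n₁ : ℝ) * θ₁ - (n₂ : ℝ) * θ₂) ^ 2 + 4 * (n₁ : ℝ) * (n₂ : ℝ) * φ ^ 2 := by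
      rw [hkdef]; ring
    rw [habs, harg] at this
    exact this
  have hSsr2 : sr ≤ S + |θ₁ - θ₂| := by
    have := sqrt_shift (a - b) ((n₁ : ℝ) * θ₁ - (n₂ : ℝ) * θ₂) (4 * k) (by positivity)
    have habs : |a - b - ((n₁ : ℝ) * θ₁ - (n₂ : ℝ) * θ₂)| = |θ₁ - θ₂| := by
      rw [ha, hb, show ((n₁:ℝ)-1)*θ₁ - ((n₂:ℝ)-1)*θ₂ - ((n₁:ℝ)*θ₁ - (n₂:ℝ)*θ₂) = -(θ₁-θ₂) by ring,
        abs_neg]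
    have harg : ((n₁ : ℝ) * θ₁ - (n₂ : ℝ) * θ₂) ^ 2 + 4 * k
        = ((n₁ : ℝ) * θ₁ - (n₂ : ℝ) * θ₂) ^ 2 + 4 * (n₁ : ℝ) * (n₂ : ℝ) * φ ^ 2 := by
      rw [hkdef]; ring
    rw [habs, harg] at this
    exact this
  refine ⟨((n₁ : ℝ) * θ₁ + (n₂ : ℝ) * θ₂ + S) / 2 - lam, ?_, ?_, ?_⟩
  · have hd : ((n₁ : ℝ) * θ₁ + (n₂ : ℝ) * θ₂ + S) / 2 - lam = (θ₁ + θ₂ + (S - sr)) / 2 := by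
      rw [hlamdef, ha, hb]; ring
    rw [hd]
    rcases le_total θ₁ θ₂ with h | h
    · rw [min_eq_left h]
      rw [abs_of_nonpos (by linarith)] at hSsr2
      linarith
    · rw [min_eq_right h]
      rw [abs_of_nonneg (by linarith)] at hSsr2
      linarith
  · have hd : ((n₁ : ℝ) * θ₁ + (n₂ : ℝ) * θ₂ + S) / 2 - lam = (θ₁ + θ₂ + (S - sr)) / 2 := by
      rw [hlamdef, ha, hb]; ring
    rw [hd]
    rcases le_total θ₁ θ₂ with h | h
    · rw [max_eq_right h]
      rw [abs_of_nonpos (by linarith)] at hSsr1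
      linarith
    · rw [max_eq_left h]
      rw [abs_of_nonneg (by linarith)] at hSsr1
      linarith
  · rw [hsup]; ring
end
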